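/- arXiv:1203.3398 — 5 statements merged into one kernel-verified Lean document; each statement's English description precedes it below -/
import Mathlib

section
/- Let X be a random variable taking non-negative integer values, let α > 0, and suppose P(X = k+1) ≤ (α/(k+1))·P(X = k) for all k ≥ 0. Then X is stochastically at most a Poisson random variable with mean α; that is, P(X ≥ t) ≤ P(Po(α) ≥ t) for every non-negative integer t. -/
open scoped Classical

/-- Number of connected components of a graph. -/
noncomputable def kappa {V : Type*} (G : SimpleGraph V) : ℕ :=
  Nat.card G.ConnectedComponent

/-- Number of bridges of a graph. -/
noncomputable def numBridges {V : Type*} (G : SimpleGraph V) : ℕ :=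
  {e : Sym2 V | G.IsBridge e}.ncard

/-- Number of unordered pairs of vertices lying in distinct components. -/
noncomputable def cross {V : Type*} (G : SimpleGraph V) : ℕ :=
  {p : Sym2 V | ∃ u v : V, p = s(u, v) ∧ ¬ G.Reachable u v}.ncard

/-- Number of vertices outside a largest component. -/
noncomputable def frag {V : Type*} [Fintype V] (G : SimpleGraph V) : ℕ :=
  Fintype.card V - ⨆ c : G.ConnectedComponent, c.supp.ncard

/-- The graph obtained by deleting all bridges. -/
def debridge {V : Type*} (G : SimpleGraph V) : SimpleGraph V :=
  G.deleteEdges {e : Sym2 V | G.IsBridge e}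

/-- The weight τ(G) = f(G̃) · λ^{e₀(G)} · ν^{κ(G)}. -/
noncomputable def tau {V : Type*} (f : SimpleGraph V → ℝ) (lam nu : ℝ)
    (G : SimpleGraph V) : ℝ :=
  f (debridge G) * lam ^ numBridges G * nu ^ kappa G

/-- Adding the edge uv to a graph. -/
def addEdge {V : Type*} (G : SimpleGraph V) (u v : V) : SimpleGraph V :=
  G ⊔ SimpleGraph.fromEdgeSet {s(u, v)}

/-- A class of graphs is bridge-addable if adding an edge between two vertices in
distinct components of a member yields a member. -/
def BridgeAddable {V : Type*} (A : Set (SimpleGraph V)) : Prop :=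
  ∀ G ∈ A, ∀ u v : V, ¬ G.Reachable u v → addEdge G u v ∈ A

/-- P(Po(α) ≥ t), the upper tail of a Poisson distribution with mean α. -/
noncomputable def poissonTail (α : ℝ) (t : ℕ) : ℝ :=
  ∑' i : ℕ, if t ≤ i then Real.exp (-α) * α ^ i / (Nat.factorial i) else 0

/-!
Let `q k = e^{-α} α^k / k!`. Since `q (k+1) = α/(k+1) · q k` exactly, the hypothesis says that
the likelihood ratio `p k / q k` is non-increasing in `k`. Given `t`, either `p t ≤ q t`, and then
`p ≤ q` termwise on `[t, ∞)`, or `q t ≤ p t`, and then `q ≤ p` termwise on `[0, t)`; since both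
have total mass `1`, the tails compare the opposite way to the heads.
-/

open Finset

section TailComparison

variable {f p q r : ℕ → ℝ}

theorem Summable.ite_le (hf : Summable f) (t : ℕ) :
    Summable fun i => if t ≤ i then f i else 0 :=
  (hf.indicator {i | t ≤ i}).congr fun i => by simp [Set.indicator_apply]

theorem Summable.tsum_ite_le_add_sum_range (hf : Summable f) (t : ℕ) :
    (∑' i, if t ≤ i then f i else 0) + ∑ i ∈ range t, f i = ∑' i, f i := by
  rw [← hf.sum_add_tsum_compl (s := range t), _root_.tsum_subtype, add_comm]
  congr 2 with i
  simp [Set.indicator_apply]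

/-- The likelihood-ratio order `p ≤_lr q`, cross-multiplied so that no division by zero occurs. -/
def LikelihoodRatioLE (p q : ℕ → ℝ) : Prop :=
  ∀ ⦃i j : ℕ⦄, i ≤ j → p j * q i ≤ p i * q j

theorem LikelihoodRatioLE.of_succ_le_mul (hr : ∀ k, 0 ≤ r k) (hq : ∀ k, 0 ≤ q k)
    (hp_succ : ∀ k, p (k + 1) ≤ r k * p k) (hq_succ : ∀ k, q (k + 1) = r k * q k) :
    LikelihoodRatioLE p q := by
  intro i j hij
  induction j, hij using Nat.le_induction with
  | base => exact le_rfl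
  | succ j _ ih =>
    calc p (j + 1) * q i ≤ r j * p j * q i := mul_le_mul_of_nonneg_right (hp_succ j) (hq i)
      _ = r j * (p j * q i) := mul_assoc _ _ _
      _ ≤ r j * (p i * q j) := mul_le_mul_of_nonneg_left ih (hr j)
      _ = p i * q (j + 1) := by rw [hq_succ]; ring

theorem LikelihoodRatioLE.tsum_ite_le_le (hlr : LikelihoodRatioLE p q) (hp : ∀ k, 0 ≤ p k)
    (hq : ∀ k, 0 < q k) (hps : Summable p) (hqs : Summable q)
    (hpq : ∑' k, p k = ∑' k, q k) (t : ℕ) :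
    (∑' i, if t ≤ i then p i else 0) ≤ ∑' i, if t ≤ i then q i else 0 := by
  rcases le_total (p t) (q t) with hpt | hqt
  · have hle : ∀ i, t ≤ i → p i ≤ q i := fun i hi =>
      le_of_mul_le_mul_right
        (calc p i * q t ≤ p t * q i := hlr hi
          _ ≤ q t * q i := mul_le_mul_of_nonneg_right hpt (hq i).le
          _ = q i * q t := mul_comm _ _)
        (hq t)
    refine (hps.ite_le t).tsum_le_tsum (fun i => ?_) (hqs.ite_le t)
    split_ifs with hi
    exacts [hle i hi, le_rfl]
  · have hge : ∀ i ∈ range t, q i ≤ p i := fun i hi =>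
      le_of_mul_le_mul_right
        (calc q i * p t = p t * q i := mul_comm _ _
          _ ≤ p i * q t := hlr (mem_range.mp hi).le
          _ ≤ p i * p t := mul_le_mul_of_nonneg_left hqt (hp i))
        ((hq t).trans_le hqt)
    have hhead := sum_le_sum hge
    have hp_split := hps.tsum_ite_le_add_sum_range t
    have hq_split := hqs.tsum_ite_le_add_sum_range t
    linarith

end TailComparison

section PoissonWeight

open Nat

noncomputable def poissonWeight (α : ℝ) (i : ℕ) : ℝ :=
  Real.exp (-α) * α ^ i / i !

theorem poissonWeight_pos {α : ℝ} (hα : 0 < α) (i : ℕ) : 0 < poissonWeight α i := by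
  unfold poissonWeight
  positivity

theorem poissonWeight_succ (α : ℝ) (k : ℕ) :
    poissonWeight α (k + 1) = α / (k + 1) * poissonWeight α k := by
  unfold poissonWeight
  push_cast [factorial_succ, pow_succ]
  field_simp

theorem hasSum_poissonWeight (α : ℝ) : HasSum (poissonWeight α) 1 := by
  have h := (NormedSpace.expSeries_div_hasSum_exp α).mul_left (Real.exp (-α))
  rw [← Real.exp_eq_exp_ℝ, ← Real.exp_add, neg_add_cancel, Real.exp_zero] at h
  unfold poissonWeight
  simpa only [mul_div_assoc] using h

end PoissonWeight

/-- if a nonnegative-integer-valued random variable `X` (with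
distribution `p`) satisfies `P(X = k+1) ≤ (α/(k+1))·P(X = k)` for all `k`, then
`X` is stochastically at most `Po(α)`. -/
theorem stmt4 (p : ℕ → ℝ) (hp : ∀ k, 0 ≤ p k) (hp1 : ∑' k, p k = 1)
    (α : ℝ) (hα : 0 < α)
    (h : ∀ k : ℕ, p (k + 1) ≤ α / (k + 1) * p k) :
    ∀ t : ℕ, (∑' i : ℕ, if t ≤ i then p i else 0) ≤ poissonTail α t := by
  have hps : Summable p := by
    by_contra hns
    rw [tsum_eq_zero_of_not_summable hns] at hp1
    exact zero_ne_one hp1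
  have hlr : LikelihoodRatioLE p (poissonWeight α) :=
    .of_succ_le_mul (fun k => by positivity) (fun k => (poissonWeight_pos hα k).le) h
      (poissonWeight_succ α)
  exact hlr.tsum_ite_le_le hp (poissonWeight_pos hα) hps (hasSum_poissonWeight α).summable
    (hp1.trans (hasSum_poissonWeight α).tsum_eq.symm)
end

section
/- Let X take non-negative integer values, let α > 0, let k₀ be a positive integer, and suppose P(X = k+1) ≤ (α/(k+1))·P(X = k) for k = 0, …, k₀−1. Then for each k = 0, …, k₀, P(k₀ ≥ X ≥ k) ≤ P(Po(α) ≥ k). -/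
open scoped Classical

/-- if `P(X = k+1) ≤ (α/(k+1))·P(X = k)` for `k = 0, …, k₀−1`, then
`P(k₀ ≥ X ≥ k) ≤ P(Po(α) ≥ k)` for each `k = 0, …, k₀`. -/
theorem stmt5 (p : ℕ → ℝ) (hp : ∀ k, 0 ≤ p k) (hp1 : ∑' k, p k = 1)
    (α : ℝ) (hα : 0 < α) (k₀ : ℕ) (hk₀ : 0 < k₀)
    (h : ∀ k < k₀, p (k + 1) ≤ α / (k + 1) * p k) :
    ∀ k ≤ k₀, ∑ i ∈ Finset.Icc k k₀, p i ≤ poissonTail α k := by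
  intro k hk
  set q : ℕ → ℝ := fun i => Real.exp (-α) * α ^ i / (Nat.factorial i) with hq
  have hq0 : ∀ i, 0 < q i := fun i => by
    apply div_pos (mul_pos (Real.exp_pos _) (pow_pos hα i))
    exact_mod_cast Nat.factorial_pos i
  have hqsum : Summable q := by
    have := (Real.summable_pow_div_factorial α).mul_left (Real.exp (-α))
    simpa [hq, mul_div_assoc] using this
  have hqtot : ∑' i, q i = 1 := by
    have hE : ∑' i : ℕ, α ^ i / (Nat.factorial i : ℝ) = Real.exp α := by
      rw [Real.exp_eq_exp_ℝ, NormedSpace.exp_eq_tsum_div]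
    calc ∑' i, q i = Real.exp (-α) * ∑' i : ℕ, α ^ i / (Nat.factorial i : ℝ) := by
          rw [← tsum_mul_left]; simp [hq, mul_div_assoc]
      _ = 1 := by rw [hE, ← Real.exp_add]; simp
  -- q recurrence
  have hqrec : ∀ n : ℕ, q (n + 1) = α / (n + 1) * q n := by
    intro n
    have hn : ((n : ℝ) + 1) ≠ 0 := by positivity
    have hfn : ((n.factorial : ℝ)) ≠ 0 := by exact_mod_cast (Nat.factorial_pos n).ne'
    simp only [hq]
    rw [Nat.factorial_succ]
    push_cast
    field_simp
    ring
  -- summability of p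
  have hpsum : Summable p := by
    by_contra hs
    rw [tsum_eq_zero_of_not_summable hs] at hp1
    norm_num at hp1
  -- chain lemma
  have chain : ∀ d a, a + d ≤ k₀ → p (a + d) * q a ≤ p a * q (a + d) := by
    intro d
    induction d with
    | zero => intro a _; simp
    | succ d ih =>
      intro a hle
      have hlt : a + d < k₀ := by omega
      have h1 := h _ hlt
      have hc : (0:ℝ) ≤ α / (↑(a + d) + 1) := by positivity
      calc p (a + (d+1)) * q a = p ((a + d) + 1) * q a := by ring_nf
        _ ≤ (α / (↑(a+d) + 1) * p (a + d)) * q a := by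
            apply mul_le_mul_of_nonneg_right _ (hq0 a).le
            push_cast
            push_cast at h1
            linarith
        _ = α / (↑(a+d) + 1) * (p (a + d) * q a) := by ring
        _ ≤ α / (↑(a+d) + 1) * (p a * q (a + d)) := by
            apply mul_le_mul_of_nonneg_left (ih a (by omega)) hc
        _ = p a * (α / (↑(a+d) + 1) * q (a + d)) := by ring
        _ = p a * q (a + (d+1)) := by rw [← hqrec (a+d)]; ring_nf
  have chain' : ∀ a b, a ≤ b → b ≤ k₀ → p b * q a ≤ p a * q b := by
    intro a b hab hb
    obtain ⟨d, rfl⟩ := Nat.exists_eq_add_of_le hab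
    exact chain d a hb
  -- tail function
  set g : ℕ → ℝ := fun i => if k ≤ i then q i else 0 with hg
  have hg0 : ∀ i, 0 ≤ g i := fun i => by
    simp only [hg]; split <;> [exact (hq0 i).le; rfl]
  have hgsum : Summable g := by
    apply hqsum.of_nonneg_of_le hg0
    intro i; simp only [hg]; split <;> [exact le_rfl; exact (hq0 i).le]
  by_contra hcon
  push_neg at hcon
  have hPT : poissonTail α k = ∑' i, g i := rfl
  -- poissonTail ≥ sum of q over Icc k k₀
  have h1 : ∑ i ∈ Finset.Icc k k₀, q i ≤ poissonTail α k := by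
    rw [hPT]
    have : ∑ i ∈ Finset.Icc k k₀, q i = ∑ i ∈ Finset.Icc k k₀, g i := by
      apply Finset.sum_congr rfl
      intro i hi
      simp only [hg, if_pos (Finset.mem_Icc.mp hi).1]
    rw [this]
    exact Summable.sum_le_tsum _ (fun i _ => hg0 i) hgsum
  -- split: ∑_{i<k} q_i + poissonTail = 1
  have hsplit : ∑ i ∈ Finset.range k, q i + poissonTail α k = 1 := by
    rw [hPT, ← hqtot]
    have hhead : ∑ i ∈ Finset.range k, q i = ∑' i, (if i < k then q i else 0) := by
      rw [tsum_eq_sum (s := Finset.range k)]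
      · apply Finset.sum_congr rfl; intro i hi
        rw [if_pos (Finset.mem_range.mp hi)]
      · intro i hi; rw [if_neg (by simpa using hi)]
    rw [hhead, ← Summable.tsum_add]
    · apply tsum_congr; intro i
      simp only [hg]
      by_cases hik : k ≤ i
      · rw [if_neg (by omega), if_pos hik]; ring
      · rw [if_pos (by omega), if_neg hik]; ring
    · apply hqsum.of_nonneg_of_le (fun i => by split <;> [exact (hq0 i).le; rfl])
      intro i; split <;> [exact le_rfl; exact (hq0 i).le]
    · exact hgsum
  -- head sums of p
  have hheadp : ∑ i ∈ Finset.range k, p i + ∑ i ∈ Finset.Icc k k₀, p i ≤ 1 := by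
    rw [← hp1]
    have hdisj : Disjoint (Finset.range k) (Finset.Icc k k₀) := by
      simp [Finset.disjoint_left]; intro i hi; omega
    rw [← Finset.sum_union hdisj]
    exact Summable.sum_le_tsum _ (fun i _ => hp i) hpsum
  -- derive: head p sum < head q sum
  have hheadlt : ∑ i ∈ Finset.range k, p i < ∑ i ∈ Finset.range k, q i := by
    have := hcon
    nlinarith [hsplit, hheadp]
  -- ∃ j < k with p j < q j
  have hjex : ∃ j ∈ Finset.range k, p j < q j := by
    by_contra hjc
    push_neg at hjc
    exact absurd (Finset.sum_le_sum hjc) (not_le.mpr hheadlt)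
  -- ∃ i ∈ Icc with q i < p i
  have hiex : ∃ i ∈ Finset.Icc k k₀, q i < p i := by
    by_contra hic
    push_neg at hic
    exact absurd (le_trans (Finset.sum_le_sum hic) h1) (not_le.mpr hcon)
  obtain ⟨j, hjmem, hj⟩ := hjex
  obtain ⟨i, himem, hi⟩ := hiex
  rw [Finset.mem_range] at hjmem
  rw [Finset.mem_Icc] at himem
  have hji : j ≤ i := by omega
  have := chain' j i hji himem.2
  nlinarith [hq0 i, hq0 j, hp i, hp j]
end

section
/- For each n ≥ 1, let μ_n be a measure on graphs with vertex set a subset of [n] that is multiplicative on components (if G has components H₁,…,H_k then μ_n(G) = ∏ μ_n(H_i)). Suppose there exist α > 0 and integers n ≥ m₀ ≥ 1 such that μ_n(G²_V) ≤ α·μ_n(G¹_V) for all V ⊆ [n] with |V| ≥ m₀, where G^k_V is the set of graphs on vertex set V with exactly k components. Then for all integers k ≥ 1 with n ≥ k·m₀, μ_n(G^{k+1}_{[n]}) ≤ (α/k)·μ_n(G^k_{[n]}). -/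
open scoped Classical

/-- The disjoint union of a graph on `V₁` and a graph on `V₂`, viewed as a graph
on `V₁ ∪ V₂` (no edges between the two parts). -/
def glue {n : ℕ} (V₁ V₂ : Finset (Fin n)) (G₁ : SimpleGraph ↥V₁)
    (G₂ : SimpleGraph ↥V₂) : SimpleGraph ↥(V₁ ∪ V₂) where
  Adj a b :=
    (∃ (ha : ↑a ∈ V₁) (hb : ↑b ∈ V₁), G₁.Adj ⟨a, ha⟩ ⟨b, hb⟩) ∨
      (∃ (ha : ↑a ∈ V₂) (hb : ↑b ∈ V₂), G₂.Adj ⟨a, ha⟩ ⟨b, hb⟩)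
  symm := by
    constructor
    rintro a b (⟨ha, hb, h⟩ | ⟨ha, hb, h⟩)
    · exact Or.inl ⟨hb, ha, h.symm⟩
    · exact Or.inr ⟨hb, ha, h.symm⟩
  loopless := by
    constructor
    rintro a (⟨ha, hb, h⟩ | ⟨ha, hb, h⟩)
    · exact G₁.irrefl h
    · exact G₂.irrefl h

/-!
Write `k = b + 1`; the case `k = 1` is the hypothesis for `V = [n]`. Double count the pairs
`(G, W)` in which `W` is a union of components of `G` that is strictly larger than every other
component of `G`. By multiplicativity, the weight of the pairs with `G[W]` having `a` components
and `|W| ≥ m₀` is `∑_W μ(G^a_W) · D(W)`, where `D(W)` weighs the graphs on the complement of `W`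
with `b` components, all smaller than `|W|`; the hypothesis compares the terms for `a = 2` and
`a = 1` one `W` at a time. A graph with `k + 1` components lies in at least `k` pairs with `a = 2`:
take `W = A ∪ B` with `A` a largest component, and then `k |A| + |B| ≥ n ≥ k m₀` gives
`|W| ≥ m₀`. A graph with `k` components lies in at most one pair with `a = 1`, since `W` must
then be its unique largest component.
-/

noncomputable section

namespace ComponentCount

open Finset SimpleGraph

variable {α : Type*}

theorem exists_reachable_comap {X A : Type*} {G : SimpleGraph X} (f : A → X)
    (hf : ∀ a y, G.Adj (f a) y → ∃ b, f b = y) {a : A} {y : X} (h : G.Reachable (f a) y) :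
    ∃ b, f b = y ∧ (G.comap f).Reachable a b := by
  obtain ⟨p⟩ := h
  suffices ∀ {x y} (p : G.Walk x y) (a : A), f a = x → ∃ b, f b = y ∧ (G.comap f).Reachable a b
    from this p a rfl
  intro x y p
  induction p with
  | nil => exact fun a ha => ⟨a, ha, .rfl⟩
  | cons hadj _ ih =>
    rintro a rfl
    obtain ⟨c, rfl⟩ := hf a _ hadj
    obtain ⟨b, hb, hr⟩ := ih c rfl
    exact ⟨b, hb, (Adj.reachable (G := G.comap f) hadj).trans hr⟩

section Components

variable {V : Finset α} {G : SimpleGraph ↥V}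

def componentFinset (c : G.ConnectedComponent) : Finset α :=
  (univ.filter (G.connectedComponentMk · = c)).map (Function.Embedding.subtype _)

theorem mem_componentFinset {c : G.ConnectedComponent} {a : α} :
    a ∈ componentFinset c ↔ ∃ h : a ∈ V, G.connectedComponentMk ⟨a, h⟩ = c := by
  simp [componentFinset]

theorem componentFinset_injective : Function.Injective (componentFinset (G := G)) := by
  intro c d h
  obtain ⟨v, rfl⟩ := c.exists_rep
  obtain ⟨_, hv⟩ := mem_componentFinset.mp (h ▸ mem_componentFinset.mpr ⟨v.2, rfl⟩)
  exact hv

variable [DecidableEq α]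

def components (G : SimpleGraph ↥V) : Finset (Finset α) :=
  univ.image (componentFinset (G := G))

theorem mem_components {C : Finset α} :
    C ∈ components G ↔ ∃ c : G.ConnectedComponent, componentFinset c = C := by
  simp [components]

variable (G) in
theorem kappa_eq_card_components : kappa G = #(components G) := by
  rw [components, card_image_of_injective _ componentFinset_injective, card_univ, kappa,
    Nat.card_eq_fintype_card]

theorem nonempty_of_mem_components {C : Finset α} (hC : C ∈ components G) : C.Nonempty := by
  obtain ⟨c, rfl⟩ := mem_components.mp hC
  obtain ⟨v, rfl⟩ := c.exists_rep
  exact ⟨v, mem_componentFinset.mpr ⟨v.2, rfl⟩⟩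

theorem subset_of_mem_components {C : Finset α} (hC : C ∈ components G) : C ⊆ V := by
  obtain ⟨c, rfl⟩ := mem_components.mp hC
  intro a ha
  exact (mem_componentFinset.mp ha).1

theorem nonempty_of_kappa_pos (h : 0 < kappa G) : V.Nonempty := by
  obtain ⟨C, hC⟩ := card_pos.mp (kappa_eq_card_components G ▸ h)
  exact (nonempty_of_mem_components hC).mono (subset_of_mem_components hC)

theorem eq_of_mem_components {C D : Finset α} (hC : C ∈ components G) (hD : D ∈ components G)
    {a : α} (haC : a ∈ C) (haD : a ∈ D) : C = D := by
  obtain ⟨c, rfl⟩ := mem_components.mp hC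
  obtain ⟨d, rfl⟩ := mem_components.mp hD
  obtain ⟨_, rfl⟩ := mem_componentFinset.mp haC
  obtain ⟨_, rfl⟩ := mem_componentFinset.mp haD
  rfl

theorem disjoint_of_mem_components {C D : Finset α} (hC : C ∈ components G)
    (hD : D ∈ components G) (hCD : C ≠ D) : Disjoint C D :=
  disjoint_left.mpr fun _ haC haD => hCD (eq_of_mem_components hC hD haC haD)

variable (G) in
theorem sum_card_components : ∑ C ∈ components G, #C = #V := by
  rw [components, sum_image fun _ _ _ _ h => componentFinset_injective h]
  simp only [componentFinset, card_map]
  rw [← card_attach (s := V), ← univ_eq_attach,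
    card_eq_sum_card_fiberwise (f := G.connectedComponentMk) fun _ _ => mem_univ _]

end Components

def NoEdgeLeaving {V : Finset α} (G : SimpleGraph ↥V) (W : Finset α) : Prop :=
  ∀ x y, G.Adj x y → ((x : α) ∈ W ↔ (y : α) ∈ W)

section Restrict

variable [Fintype α] {G : SimpleGraph ↥(univ : Finset α)} {W : Finset α}

def restrict (G : SimpleGraph ↥(univ : Finset α)) (W : Finset α) : SimpleGraph ↥W :=
  G.comap fun x => ⟨x, mem_univ _⟩

theorem componentFinset_restrict_mk (h : NoEdgeLeaving G W) (x : ↥W) :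
    componentFinset ((restrict G W).connectedComponentMk x) =
      componentFinset (G.connectedComponentMk ⟨x, mem_univ _⟩) := by
  ext a
  simp only [mem_componentFinset, ConnectedComponent.eq, mem_univ, exists_true_left]
  constructor
  · rintro ⟨_, hr⟩
    exact hr.map (⟨fun y => ⟨y, mem_univ _⟩, id⟩ : restrict G W →g G)
  · intro hr
    obtain ⟨b, hb, hbx⟩ := exists_reachable_comap
      (fun y : ↥W => (⟨y.1, mem_univ _⟩ : ↥(univ : Finset α)))
      (fun (b : ↥W) (y : ↥(univ : Finset α)) hby => ⟨⟨y.1, (h _ y hby).mp b.2⟩, rfl⟩) hr.symm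
    obtain rfl : (b : α) = a := congrArg Subtype.val hb
    exact ⟨b.2, hbx.symm⟩

variable [DecidableEq α]

theorem NoEdgeLeaving.compl (h : NoEdgeLeaving G W) : NoEdgeLeaving G Wᶜ :=
  fun x y hxy => by simpa only [mem_compl, not_iff_not] using h x y hxy

theorem NoEdgeLeaving.union {W' : Finset α} (h : NoEdgeLeaving G W) (h' : NoEdgeLeaving G W') :
    NoEdgeLeaving G (W ∪ W') :=
  fun x y hxy => by simp only [mem_union, h x y hxy, h' x y hxy]

theorem noEdgeLeaving_of_mem_components {C : Finset α} (hC : C ∈ components G) :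
    NoEdgeLeaving G C := by
  obtain ⟨c, rfl⟩ := mem_components.mp hC
  intro x y hxy
  simp [mem_componentFinset, ConnectedComponent.connectedComponentMk_eq_of_adj hxy]

theorem components_eq_union (h : NoEdgeLeaving G W) :
    components G = components (restrict G W) ∪ components (restrict G Wᶜ) := by
  ext C
  simp only [mem_union, mem_components]
  constructor
  · rintro ⟨c, rfl⟩
    obtain ⟨v, rfl⟩ := c.exists_rep
    by_cases hv : (v : α) ∈ W
    · exact Or.inl ⟨_, componentFinset_restrict_mk h ⟨v, hv⟩⟩
    · exact Or.inr ⟨_, componentFinset_restrict_mk h.compl ⟨v, mem_compl.mpr hv⟩⟩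
  · rintro (⟨c, rfl⟩ | ⟨c, rfl⟩) <;> obtain ⟨x, rfl⟩ := c.exists_rep
    · exact ⟨_, (componentFinset_restrict_mk h x).symm⟩
    · exact ⟨_, (componentFinset_restrict_mk h.compl x).symm⟩

theorem mem_components_restrict_iff (h : NoEdgeLeaving G W) {C : Finset α} :
    C ∈ components (restrict G W) ↔ C ∈ components G ∧ C ⊆ W := by
  refine ⟨fun hC => ⟨components_eq_union h ▸ mem_union_left _ hC,
    subset_of_mem_components hC⟩, fun ⟨hC, hCW⟩ => ?_⟩
  rcases mem_union.mp (components_eq_union h ▸ hC) with hC' | hC'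
  · exact hC'
  · obtain ⟨a, ha⟩ := nonempty_of_mem_components hC'
    exact absurd (hCW ha) (mem_compl.mp (subset_of_mem_components hC' ha))

theorem kappa_eq_add (h : NoEdgeLeaving G W) :
    kappa G = kappa (restrict G W) + kappa (restrict G Wᶜ) := by
  simp only [kappa_eq_card_components]
  rw [components_eq_union h, card_union_of_disjoint]
  refine disjoint_left.mpr fun C hC hC' => ?_
  obtain ⟨a, ha⟩ := nonempty_of_mem_components hC
  exact mem_compl.mp (subset_of_mem_components hC' ha) (subset_of_mem_components hC ha)

theorem mem_components_of_kappa_restrict_eq_one (h : NoEdgeLeaving G W)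
    (h1 : kappa (restrict G W) = 1) : W ∈ components G := by
  rw [kappa_eq_card_components, card_eq_one] at h1
  obtain ⟨C, hC⟩ := h1
  have hCW : C = W := by
    have hsum := sum_card_components (restrict G W)
    rw [hC, sum_singleton] at hsum
    exact eq_of_subset_of_card_le (subset_of_mem_components (hC ▸ mem_singleton_self C))
      hsum.ge
  exact ((mem_components_restrict_iff h).mp (hC ▸ hCW ▸ mem_singleton_self C)).1

def IsDominantSplit (a b : ℕ) (G : SimpleGraph ↥(univ : Finset α)) (W : Finset α) : Prop :=
  NoEdgeLeaving G W ∧ kappa (restrict G W) = a ∧ kappa (restrict G Wᶜ) = b ∧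
    ∀ C ∈ components (restrict G Wᶜ), #C < #W

theorem IsDominantSplit.kappa_eq {a b : ℕ} (h : IsDominantSplit a b G W) : kappa G = a + b := by
  rw [kappa_eq_add h.1, h.2.1, h.2.2.1]

theorem card_filter_isDominantSplit_one_le (b : ℕ) (s : Finset (Finset α)) :
    #{W ∈ s | IsDominantSplit 1 b G W} ≤ 1 := by
  refine card_le_one.mpr fun W hW W' hW' => ?_
  obtain ⟨hW, h1, -, hsmall⟩ := (mem_filter.mp hW).2
  obtain ⟨hW', h1', -, hsmall'⟩ := (mem_filter.mp hW').2
  have hWc := mem_components_of_kappa_restrict_eq_one hW h1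
  have hWc' := mem_components_of_kappa_restrict_eq_one hW' h1'
  by_contra hne
  have hdisj := disjoint_of_mem_components hWc hWc' hne
  have hlt := hsmall W' ((mem_components_restrict_iff hW.compl).mpr
    ⟨hWc', subset_compl_iff_disjoint_right.mpr hdisj.symm⟩)
  have hlt' := hsmall' W ((mem_components_restrict_iff hW'.compl).mpr
    ⟨hWc, subset_compl_iff_disjoint_right.mpr hdisj⟩)
  omega

theorem isDominantSplit_union {b : ℕ} (hG : kappa G = b + 2) {A B : Finset α}
    (hA : A ∈ components G) (hAmax : ∀ C ∈ components G, #C ≤ #A) (hB : B ∈ components G)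
    (hBA : B ≠ A) : IsDominantSplit 2 b G (A ∪ B) := by
  have hAB : Disjoint A B := disjoint_of_mem_components hA hB hBA.symm
  have hW : NoEdgeLeaving G (A ∪ B) :=
    (noEdgeLeaving_of_mem_components hA).union (noEdgeLeaving_of_mem_components hB)
  have hcomps : components (restrict G (A ∪ B)) = {A, B} := by
    ext C
    rw [mem_components_restrict_iff hW, mem_insert, mem_singleton]
    constructor
    · rintro ⟨hC, hCAB⟩
      obtain ⟨a, ha⟩ := nonempty_of_mem_components hC
      rcases mem_union.mp (hCAB ha) with haA | haB
      · exact Or.inl (eq_of_mem_components hC hA ha haA)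
      · exact Or.inr (eq_of_mem_components hC hB ha haB)
    · rintro (rfl | rfl)
      · exact ⟨hA, subset_union_left⟩
      · exact ⟨hB, subset_union_right⟩
  have h2 : kappa (restrict G (A ∪ B)) = 2 := by
    rw [kappa_eq_card_components, hcomps, card_pair hBA.symm]
  refine ⟨hW, h2, by have := kappa_eq_add hW; omega, fun C hC => ?_⟩
  have hCA := hAmax C ((mem_components_restrict_iff hW.compl).mp hC).1
  have hBpos := card_pos.mpr (nonempty_of_mem_components hB)
  rw [card_union_of_disjoint hAB]
  omega

theorem le_card_filter_isDominantSplit_two {b m₀ : ℕ} (hG : kappa G = b + 2)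
    (hm₀ : (b + 1) * m₀ ≤ Fintype.card α) :
    b + 1 ≤ #{W ∈ {W : Finset α | m₀ ≤ #W} | IsDominantSplit 2 b G W} := by
  have hcard : #(components G) = b + 2 := kappa_eq_card_components G ▸ hG
  obtain ⟨A, hA, hAmax⟩ := exists_max_image (components G) card (card_pos.mp (by omega))
  calc b + 1 = #((components G).erase A) := by rw [card_erase_of_mem hA, hcard]; rfl
    _ ≤ _ := card_le_card_of_injOn (A ∪ ·) (fun B hB => ?_) fun B hB B' hB' hBB' => ?_
  · obtain ⟨hBA, hB⟩ := mem_erase.mp hB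
    have hAB : Disjoint A B := disjoint_of_mem_components hA hB hBA.symm
    have hn : Fintype.card α ≤ #B + (b + 1) * #A := by
      have hsum := sum_card_components G
      rw [card_univ, ← add_sum_erase _ _ hB] at hsum
      have hrest := sum_le_card_nsmul ((components G).erase B) (fun C => #C) #A
        fun C hC => hAmax C (mem_of_mem_erase hC)
      rw [card_erase_of_mem hB, hcard, smul_eq_mul, show b + 2 - 1 = b + 1 from rfl] at hrest
      omega
    have hm : (b + 1) * m₀ ≤ (b + 1) * #(A ∪ B) := by
      rw [card_union_of_disjoint hAB]
      nlinarith
    simp only [coe_filter, mem_filter, mem_univ, true_and]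
    exact ⟨Nat.le_of_mul_le_mul_left hm b.succ_pos, isDominantSplit_union hG hA hAmax hB hBA⟩
  · have hAB := disjoint_of_mem_components hA (mem_of_mem_erase hB) (ne_of_mem_erase hB).symm
    have hAB' := disjoint_of_mem_components hA (mem_of_mem_erase hB') (ne_of_mem_erase hB').symm
    rw [← union_sdiff_cancel_left hAB, ← union_sdiff_cancel_left hAB']
    exact congrArg (· \ A) hBB'

end Restrict

theorem apply_comap_of_eq {β : Type*} (F : ∀ V : Finset α, SimpleGraph ↥V → β) {A B : Finset α}
    (h : A = B) (G : SimpleGraph ↥A) : F B (G.comap fun x => ⟨x, h ▸ x.2⟩) = F A G := by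
  subst h
  rfl

section Glue

variable {n : ℕ}

/-- `glue W Wᶜ` lives on `W ∪ Wᶜ`, which is only propositionally equal to `univ`. -/
def glueCompl (W : Finset (Fin n)) (G₁ : SimpleGraph ↥W) (G₂ : SimpleGraph ↥Wᶜ) :
    SimpleGraph ↥(univ : Finset (Fin n)) :=
  (glue W Wᶜ G₁ G₂).comap fun x => ⟨x, by simp⟩

variable {W : Finset (Fin n)} (G₁ : SimpleGraph ↥W) (G₂ : SimpleGraph ↥Wᶜ)

theorem noEdgeLeaving_glueCompl : NoEdgeLeaving (glueCompl W G₁ G₂) W := by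
  rintro x y (⟨hx, hy, -⟩ | ⟨hx, hy, -⟩)
  · exact iff_of_true hx hy
  · exact iff_of_false (mem_compl.mp hx) (mem_compl.mp hy)

theorem restrict_glueCompl_left : restrict (glueCompl W G₁ G₂) W = G₁ := by
  ext a b
  exact ⟨fun h => h.elim (fun ⟨_, _, h⟩ => h) fun ⟨ha, _, _⟩ => absurd a.2 (mem_compl.mp ha),
    fun h => Or.inl ⟨a.2, b.2, h⟩⟩

theorem restrict_glueCompl_right : restrict (glueCompl W G₁ G₂) Wᶜ = G₂ := by
  ext a b
  exact ⟨fun h => h.elim (fun ⟨ha, _, _⟩ => absurd ha (mem_compl.mp a.2)) fun ⟨_, _, h⟩ => h,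
    fun h => Or.inr ⟨a.2, b.2, h⟩⟩

theorem glueCompl_restrict {G : SimpleGraph ↥(univ : Finset (Fin n))} (h : NoEdgeLeaving G W) :
    glueCompl W (restrict G W) (restrict G Wᶜ) = G := by
  ext x y
  refine ⟨fun h => h.elim (fun ⟨_, _, h⟩ => h) fun ⟨_, _, h⟩ => h, fun hxy => ?_⟩
  by_cases hx : (x : Fin n) ∈ W
  · exact Or.inl ⟨hx, (h x y hxy).mp hx, hxy⟩
  · exact Or.inr ⟨mem_compl.mpr hx, mem_compl.mpr fun hy => hx ((h x y hxy).mpr hy), hxy⟩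

end Glue

section DoubleCounting

variable {n : ℕ} {R : Type*} [CommSemiring R] (μ : ∀ V : Finset (Fin n), SimpleGraph ↥V → R)
  (hmult : ∀ V₁ V₂ : Finset (Fin n), V₁.Nonempty → V₂.Nonempty → Disjoint V₁ V₂ →
    ∀ (G₁ : SimpleGraph ↥V₁) (G₂ : SimpleGraph ↥V₂),
      μ (V₁ ∪ V₂) (glue V₁ V₂ G₁ G₂) = μ V₁ G₁ * μ V₂ G₂)
include hmult

theorem sum_mul_sum_eq_sum_noEdgeLeaving {W : Finset (Fin n)} (P₁ : SimpleGraph ↥W → Prop)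
    (P₂ : SimpleGraph ↥Wᶜ → Prop) [DecidablePred P₁] [DecidablePred P₂]
    (h₁ : ∀ G₁, P₁ G₁ → W.Nonempty) (h₂ : ∀ G₂, P₂ G₂ → Wᶜ.Nonempty) :
    (∑ G₁ ∈ univ.filter P₁, μ W G₁) * (∑ G₂ ∈ univ.filter P₂, μ Wᶜ G₂) =
      ∑ G ∈ univ.filter (fun G => NoEdgeLeaving G W ∧ P₁ (restrict G W) ∧
        P₂ (restrict G Wᶜ)), μ univ G := by
  rw [sum_mul_sum, ← sum_product']
  refine sum_nbij' (fun p => glueCompl W p.1 p.2) (fun G => (restrict G W, restrict G Wᶜ))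
    (fun p hp => ?_) (fun G hG => ?_) (fun p _ => ?_) (fun G hG => ?_) (fun p hp => ?_)
  · simp only [mem_product, mem_filter, mem_univ, true_and] at hp ⊢
    rw [restrict_glueCompl_left, restrict_glueCompl_right]
    exact ⟨noEdgeLeaving_glueCompl _ _, hp⟩
  · simp only [mem_product, mem_filter, mem_univ, true_and] at hG ⊢
    exact hG.2
  · simp only [restrict_glueCompl_left, restrict_glueCompl_right]
  · exact glueCompl_restrict (mem_filter.mp hG).2.1
  · obtain ⟨hp₁, hp₂⟩ := mem_product.mp hp
    rw [← hmult W Wᶜ (h₁ _ (mem_filter.mp hp₁).2) (h₂ _ (mem_filter.mp hp₂).2)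
      disjoint_compl_right]
    exact (apply_comap_of_eq μ (union_compl W) _).symm

theorem sum_mul_sum_eq_sum_card_mul (s : Finset (Finset (Fin n)))
    (P₁ : ∀ W : Finset (Fin n), SimpleGraph ↥W → Prop)
    (P₂ : ∀ W : Finset (Fin n), SimpleGraph ↥Wᶜ → Prop) [∀ W, DecidablePred (P₁ W)]
    [∀ W, DecidablePred (P₂ W)] (h₁ : ∀ W G₁, P₁ W G₁ → W.Nonempty)
    (h₂ : ∀ W G₂, P₂ W G₂ → Wᶜ.Nonempty)
    (Q : SimpleGraph ↥(univ : Finset (Fin n)) → Finset (Fin n) → Prop)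
    (hQ : ∀ G W, Q G W ↔ NoEdgeLeaving G W ∧ P₁ W (restrict G W) ∧ P₂ W (restrict G Wᶜ)) :
    ∑ W ∈ s, (∑ G₁ ∈ univ.filter (P₁ W), μ W G₁) * (∑ G₂ ∈ univ.filter (P₂ W), μ Wᶜ G₂) =
      ∑ G, (#{W ∈ s | Q G W} : R) * μ univ G := by
  rw [sum_congr rfl fun W _ =>
      sum_mul_sum_eq_sum_noEdgeLeaving μ hmult (P₁ W) (P₂ W) (h₁ W) (h₂ W),
    sum_comm' (t' := univ) (s' := fun G => {W ∈ s | Q G W}) fun W G => by simp [hQ]]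
  simp only [sum_const, nsmul_eq_mul]

end DoubleCounting

section Counting

variable [DecidableEq α] [Fintype α] (f : SimpleGraph ↥(univ : Finset α) → ℝ) (hf : ∀ G, 0 ≤ f G)
include hf

theorem mul_sum_kappa_le_sum_card_isDominantSplit_two {b m₀ : ℕ}
    (hm₀ : (b + 1) * m₀ ≤ Fintype.card α) :
    (b + 1 : ℝ) * ∑ G ∈ univ.filter (kappa · = b + 2), f G ≤
      ∑ G, (#{W ∈ {W : Finset α | m₀ ≤ #W} | IsDominantSplit 2 b G W} : ℝ) * f G := by
  rw [mul_sum]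
  refine (sum_le_sum fun G hG => mul_le_mul_of_nonneg_right ?_ (hf G)).trans
    (sum_le_sum_of_subset_of_nonneg (subset_univ _) fun G _ _ =>
      mul_nonneg (Nat.cast_nonneg _) (hf G))
  exact_mod_cast le_card_filter_isDominantSplit_two (mem_filter.mp hG).2 hm₀

theorem sum_card_isDominantSplit_one_le (b : ℕ) (s : Finset (Finset α)) :
    ∑ G, (#{W ∈ s | IsDominantSplit 1 b G W} : ℝ) * f G ≤
      ∑ G ∈ univ.filter (kappa · = b + 1), f G := by
  rw [sum_filter]
  refine sum_le_sum fun G _ => ?_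
  split_ifs with hG
  · exact mul_le_of_le_one_left (hf G) (by exact_mod_cast card_filter_isDominantSplit_one_le b s)
  · have hW : ∀ W ∈ s, ¬ IsDominantSplit 1 b G W :=
      fun W _ hW => hG (hW.kappa_eq.trans (add_comm 1 b))
    rw [filter_false_of_mem hW, card_empty, Nat.cast_zero, zero_mul]

end Counting

theorem mul_sum_kappa_succ_le {n : ℕ} (μ : ∀ V : Finset (Fin n), SimpleGraph ↥V → ℝ)
    (hμ0 : ∀ V G, 0 ≤ μ V G)
    (hmult : ∀ V₁ V₂ : Finset (Fin n), V₁.Nonempty → V₂.Nonempty → Disjoint V₁ V₂ →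
      ∀ (G₁ : SimpleGraph ↥V₁) (G₂ : SimpleGraph ↥V₂),
        μ (V₁ ∪ V₂) (glue V₁ V₂ G₁ G₂) = μ V₁ G₁ * μ V₂ G₂)
    {c : ℝ} (hc : 0 ≤ c) {m₀ : ℕ}
    (hyp : ∀ V : Finset (Fin n), m₀ ≤ #V →
      ∑ G ∈ univ.filter (kappa · = 2), μ V G ≤ c * ∑ G ∈ univ.filter (kappa · = 1), μ V G)
    {b : ℕ} (hb : 1 ≤ b) (hbn : (b + 1) * m₀ ≤ n) :
    (b + 1 : ℝ) * ∑ G ∈ univ.filter (kappa · = b + 2), μ univ G ≤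
      c * ∑ G ∈ univ.filter (kappa · = b + 1), μ univ G := by
  let s : Finset (Finset (Fin n)) := {W | m₀ ≤ #W}
  have hsplit (a : ℕ) (ha : 1 ≤ a) := sum_mul_sum_eq_sum_card_mul μ hmult s
    (fun _ G₁ => kappa G₁ = a) (fun W G₂ => kappa G₂ = b ∧ ∀ C ∈ components G₂, #C < #W)
    (fun _ _ h => nonempty_of_kappa_pos (h ▸ ha)) (fun _ _ h => nonempty_of_kappa_pos (h.1 ▸ hb))
    (IsDominantSplit a b) fun _ _ => Iff.rfl
  calc (b + 1 : ℝ) * ∑ G ∈ univ.filter (kappa · = b + 2), μ univ G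
      ≤ ∑ G, (#{W ∈ s | IsDominantSplit 2 b G W} : ℝ) * μ univ G :=
        mul_sum_kappa_le_sum_card_isDominantSplit_two _ (hμ0 _) (by simpa using hbn)
    _ = _ := (hsplit 2 (by norm_num)).symm
    _ ≤ ∑ W ∈ s, c * (∑ G₁ ∈ univ.filter (kappa · = 1), μ W G₁) *
          ∑ G₂ ∈ univ.filter (fun G₂ => kappa G₂ = b ∧ ∀ C ∈ components G₂, #C < #W), μ Wᶜ G₂ :=
        sum_le_sum fun W hW => mul_le_mul_of_nonneg_right (hyp W (mem_filter.mp hW).2)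
          (sum_nonneg fun _ _ => hμ0 _ _)
    _ = c * ∑ G, (#{W ∈ s | IsDominantSplit 1 b G W} : ℝ) * μ univ G := by
        simp_rw [mul_assoc, ← mul_sum]
        exact congrArg (c * ·) (hsplit 1 le_rfl)
    _ ≤ c * ∑ G ∈ univ.filter (kappa · = b + 1), μ univ G :=
        mul_le_mul_of_nonneg_left (sum_card_isDominantSplit_one_le _ (hμ0 _) b s) hc

end ComponentCount

end

theorem stmt14_general {n : ℕ} (μ : ∀ V : Finset (Fin n), SimpleGraph ↥V → ℝ)
    (hμ0 : ∀ V G, 0 ≤ μ V G)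
    (hmult : ∀ V₁ V₂ : Finset (Fin n), V₁.Nonempty → V₂.Nonempty →
      Disjoint V₁ V₂ → ∀ (G₁ : SimpleGraph ↥V₁) (G₂ : SimpleGraph ↥V₂),
        μ (V₁ ∪ V₂) (glue V₁ V₂ G₁ G₂) = μ V₁ G₁ * μ V₂ G₂)
    (α : ℝ) (hα : 0 < α) (m₀ : ℕ)
    (hyp : ∀ V : Finset (Fin n), m₀ ≤ V.card →
      ∑ G ∈ (Finset.univ : Finset (SimpleGraph ↥V)).filter (fun G => kappa G = 2),
          μ V G ≤
        α * ∑ G ∈ (Finset.univ : Finset (SimpleGraph ↥V)).filter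
          (fun G => kappa G = 1), μ V G)
    (k : ℕ) (hk : 1 ≤ k) (hkn : k * m₀ ≤ n) :
    ∑ G ∈ (Finset.univ : Finset (SimpleGraph ↥(Finset.univ : Finset (Fin n)))).filter
        (fun G => kappa G = k + 1), μ Finset.univ G ≤
      α / k * ∑ G ∈ (Finset.univ :
          Finset (SimpleGraph ↥(Finset.univ : Finset (Fin n)))).filter
        (fun G => kappa G = k), μ Finset.univ G := by
  rcases (show k = 1 ∨ 2 ≤ k by omega) with rfl | hk2
  · simpa using hyp Finset.univ (by simpa using hkn)
  obtain ⟨b, rfl⟩ : ∃ b, k = b + 1 := ⟨k - 1, by omega⟩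
  have key := ComponentCount.mul_sum_kappa_succ_le μ hμ0 hmult hα.le hyp (b := b) (by omega) hkn
  rw [div_mul_eq_mul_div, le_div_iff₀ (by positivity), mul_comm]
  exact_mod_cast key

/-- if `μ_n` is a measure on graphs with vertex set a subset of `[n]`
which is multiplicative on components, and `μ_n(G²_V) ≤ α·μ_n(G¹_V)` for all
`V ⊆ [n]` with `|V| ≥ m₀`, then `μ_n(G^{k+1}_{[n]}) ≤ (α/k)·μ_n(G^k_{[n]})`
whenever `k ≥ 1` and `n ≥ k·m₀`. -/
theorem stmt14 {n : ℕ} (μ : ∀ V : Finset (Fin n), SimpleGraph ↥V → ℝ)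
    (hμ0 : ∀ V G, 0 ≤ μ V G)
    (hmult : ∀ V₁ V₂ : Finset (Fin n), V₁.Nonempty → V₂.Nonempty →
      Disjoint V₁ V₂ → ∀ (G₁ : SimpleGraph ↥V₁) (G₂ : SimpleGraph ↥V₂),
        μ (V₁ ∪ V₂) (glue V₁ V₂ G₁ G₂) = μ V₁ G₁ * μ V₂ G₂)
    (α : ℝ) (hα : 0 < α) (m₀ : ℕ) (hm₀ : 1 ≤ m₀) (hm₀n : m₀ ≤ n)
    (hyp : ∀ V : Finset (Fin n), m₀ ≤ V.card →
      ∑ G ∈ (Finset.univ : Finset (SimpleGraph ↥V)).filter (fun G => kappa G = 2),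
          μ V G ≤
        α * ∑ G ∈ (Finset.univ : Finset (SimpleGraph ↥V)).filter
          (fun G => kappa G = 1), μ V G)
    (k : ℕ) (hk : 1 ≤ k) (hkn : k * m₀ ≤ n) :
    ∑ G ∈ (Finset.univ : Finset (SimpleGraph ↥(Finset.univ : Finset (Fin n)))).filter
        (fun G => kappa G = k + 1), μ Finset.univ G ≤
      α / k * ∑ G ∈ (Finset.univ :
          Finset (SimpleGraph ↥(Finset.univ : Finset (Fin n)))).filter
        (fun G => kappa G = k), μ Finset.univ G :=
  stmt14_general μ hμ0 hmult α hα m₀ hyp k hk hkn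
end

section
/- Let the rooted forest class F° consist of forests on [n] with a root chosen in each component, and let R°_n be sampled with probability proportional to τ(F) = λ^{e(F)}·ν^{κ(F)}. Then P(κ(R°_n) = k+1) = ((n−k)/n)·(ν/(λk))·P(κ(R°_n) = k) for each k ≥ 1. -/
open scoped Classical

/-- `R` is a set of roots for `G`: exactly one vertex of `R` in each component. -/
def IsRootSet {V : Type*} (G : SimpleGraph V) (R : Finset V) : Prop :=
  ∀ c : G.ConnectedComponent, ∃! v : V, v ∈ R ∧ G.connectedComponentMk v = c

/-- The rooted graphs (graph together with a choice of one root per component)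
arising from members of `A`. -/
noncomputable def rootedSet {n : ℕ} (A : Finset (SimpleGraph (Fin n))) :
    Finset (SimpleGraph (Fin n) × Finset (Fin n)) :=
  (A ×ˢ Finset.univ).filter (fun P => IsRootSet P.1 P.2)

/-! Double counting of moves between rooted forests with `k + 1` and with `k` trees. Hanging the
tree rooted at `r` below a vertex `u` of another tree, and conversely cutting a non-root vertex
from its parent, are inverse bijections; each move adds one edge and removes one component, so
it multiplies the weight by `λ / ν`. A rooted forest with `k + 1` trees admits `k n` such moves
(for each `u`, any root outside the tree of `u`), and one with `k` trees admits `e(F) = n - k`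
inverse moves (each edge has exactly one endpoint that is the child of the other). Hence
`λ k n Z_{k+1} = ν (n - k) Z_k` for the weighted counts `Z_j`. -/

open SimpleGraph Finset

namespace SimpleGraph

variable {V : Type*} {G : SimpleGraph V} {u v a b : V}

lemma deleteEdges_sup_edge (h : ¬ G.Adj u v) : (G ⊔ edge u v).deleteEdges {s(u, v)} = G :=
  (sup_sdiff_right_self (a := G) (b := edge u v)).trans (sdiff_edge _ h)

lemma deleteEdges_edge_sup_edge (h : G.Adj u v) : G.deleteEdges {s(u, v)} ⊔ edge u v = G :=
  sdiff_sup_cancel ((edge_le_iff _).mpr (Or.inr h))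

lemma reachable_sup_edge_iff :
    (G ⊔ edge u v).Reachable a b ↔ G.Reachable a b ∨ (G.Reachable a u ∧ G.Reachable v b) ∨
      (G.Reachable a v ∧ G.Reachable u b) := by
  constructor
  · rintro ⟨p⟩
    induction p with
    | nil => exact Or.inl .rfl
    | @cons a c b h q ih =>
      rcases h with h | h
      · have hac := h.reachable
        rcases ih with h1 | ⟨h1, h2⟩ | ⟨h1, h2⟩
        · exact Or.inl (hac.trans h1)
        · exact Or.inr (Or.inl ⟨hac.trans h1, h2⟩)
        · exact Or.inr (Or.inr ⟨hac.trans h1, h2⟩)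
      · rcases (edge_adj _ _ _ _).mp h with ⟨⟨rfl, rfl⟩ | ⟨rfl, rfl⟩, -⟩ <;> tauto
  · have huv : (G ⊔ edge u v).Reachable u v := by
      rcases eq_or_ne u v with rfl | hne
      · rfl
      · exact Adj.reachable (Or.inr ((edge_adj _ _ _ _).mpr ⟨Or.inl ⟨rfl, rfl⟩, hne⟩))
    have hle : G ≤ G ⊔ edge u v := le_sup_left
    rintro (h | ⟨h1, h2⟩ | ⟨h1, h2⟩)
    · exact h.mono hle
    · exact (h1.mono hle).trans (huv.trans (h2.mono hle))
    · exact (h1.mono hle).trans (huv.symm.trans (h2.mono hle))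

lemma reachable_deleteEdges_or {x y : V} (h : G.Reachable x y) :
    (G.deleteEdges {s(u, v)}).Reachable x y ∨
      ((G.deleteEdges {s(u, v)}).Reachable x u ∧ (G.deleteEdges {s(u, v)}).Reachable v y) ∨
      ((G.deleteEdges {s(u, v)}).Reachable x v ∧ (G.deleteEdges {s(u, v)}).Reachable u y) :=
  reachable_sup_edge_iff.mp (h.mono le_sdiff_sup)

end SimpleGraph

section RootSet

variable {V : Type*} {G : SimpleGraph V} {R : Finset V} {r u v : V}

lemma isRootSet_iff : IsRootSet G R ↔
    (∀ a, ∃ x ∈ R, G.Reachable x a) ∧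
      ∀ x ∈ R, ∀ y ∈ R, G.Reachable x y → x = y := by
  constructor
  · intro h
    refine ⟨fun a => ?_, fun x hx y hy hxy => ?_⟩
    · obtain ⟨x, ⟨hx, hxa⟩, -⟩ := h (G.connectedComponentMk a)
      exact ⟨x, hx, ConnectedComponent.exact hxa⟩
    · obtain ⟨z, -, hz⟩ := h (G.connectedComponentMk y)
      exact (hz x ⟨hx, ConnectedComponent.sound hxy⟩).trans (hz y ⟨hy, rfl⟩).symm
  · rintro ⟨hex, huniq⟩ c
    induction c using ConnectedComponent.ind with | h a => ?_
    obtain ⟨x, hx, hxa⟩ := hex a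
    refine ⟨x, ⟨hx, ConnectedComponent.sound hxa⟩, fun y ⟨hy, hya⟩ => ?_⟩
    exact huniq y hy x hx ((ConnectedComponent.exact hya).trans hxa.symm)

lemma IsRootSet.exists_mem_reachable (h : IsRootSet G R) (a : V) : ∃ x ∈ R, G.Reachable x a :=
  (isRootSet_iff.mp h).1 a

lemma IsRootSet.eq_of_reachable (h : IsRootSet G R) {x y : V} (hx : x ∈ R) (hy : y ∈ R)
    (hxy : G.Reachable x y) : x = y :=
  (isRootSet_iff.mp h).2 x hx y hy hxy

lemma IsRootSet.card_eq_kappa (h : IsRootSet G R) : R.card = kappa G := by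
  rw [← Nat.card_eq_finsetCard, kappa]
  refine Nat.card_eq_of_bijective (fun x : R => G.connectedComponentMk x) ⟨?_, ?_⟩
  · exact fun x y hxy => Subtype.ext (h.eq_of_reachable x.2 y.2 (ConnectedComponent.exact hxy))
  · intro c
    obtain ⟨x, ⟨hx, hxc⟩, -⟩ := h c
    exact ⟨⟨x, hx⟩, hxc⟩

lemma exists_isRootSet [Fintype V] (G : SimpleGraph V) : ∃ R, IsRootSet G R := by
  have hmk (c : G.ConnectedComponent) : G.connectedComponentMk c.out = c := Quot.out_eq c
  refine ⟨univ.filter fun v => (G.connectedComponentMk v).out = v,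
    isRootSet_iff.mpr ⟨fun a => ?_, ?_⟩⟩
  · refine ⟨(G.connectedComponentMk a).out, ?_, ConnectedComponent.exact ?_⟩ <;>
      simp only [Finset.mem_filter, Finset.mem_univ, true_and, hmk]
  · simp only [Finset.mem_filter, Finset.mem_univ, true_and]
    intro x hx y hy hxy
    rw [← hx, ← hy, ConnectedComponent.sound hxy]

lemma isRootSet_bot [Fintype V] : IsRootSet (⊥ : SimpleGraph V) univ :=
  isRootSet_iff.mpr ⟨fun a => ⟨a, mem_univ a, .rfl⟩,
    fun _ _ _ _ hxy => reachable_bot.mp hxy⟩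

variable [DecidableEq V]

lemma IsRootSet.sup_edge (h : IsRootSet G R) (hr : r ∈ R) (hru : G.Reachable r u)
    (huv : ¬ G.Reachable u v) : IsRootSet (G ⊔ edge u v) (R.erase r) := by
  have hle : G ≤ G ⊔ edge u v := le_sup_left
  refine isRootSet_iff.mpr ⟨fun a => ?_, fun x hx y hy hxy => ?_⟩
  · obtain ⟨x, hx, hxa⟩ := h.exists_mem_reachable a
    by_cases hxr : x = r
    · subst hxr
      obtain ⟨y, hy, hyv⟩ := h.exists_mem_reachable v
      have hyx : y ≠ x := by rintro rfl; exact huv (hru.symm.trans hyv)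
      refine ⟨y, mem_erase.mpr ⟨hyx, hy⟩, ?_⟩
      refine reachable_sup_edge_iff.mpr (Or.inr (Or.inr ⟨hyv, ?_⟩))
      exact hru.symm.trans hxa
    · exact ⟨x, mem_erase.mpr ⟨hxr, hx⟩, hxa.mono hle⟩
  · rw [mem_erase] at hx hy
    rcases reachable_sup_edge_iff.mp hxy with hxy | ⟨hxu, -⟩ | ⟨-, huy⟩
    · exact h.eq_of_reachable hx.2 hy.2 hxy
    · exact absurd (h.eq_of_reachable hx.2 hr (hxu.trans hru.symm)) hx.1
    · exact absurd (h.eq_of_reachable hr hy.2 (hru.trans huy)).symm hy.1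

lemma IsRootSet.deleteEdges (h : IsRootSet G R)
    (hr : ∀ x ∈ R, ¬ (G.deleteEdges {s(r, u)}).Reachable x r) :
    IsRootSet (G.deleteEdges {s(r, u)}) (insert r R) := by
  have hle : G.deleteEdges {s(r, u)} ≤ G := deleteEdges_le _
  refine isRootSet_iff.mpr ⟨fun a => ?_, fun x hx y hy hxy => ?_⟩
  · obtain ⟨x, hx, hxa⟩ := h.exists_mem_reachable a
    rcases reachable_deleteEdges_or hxa with hxa | ⟨hxr, -⟩ | ⟨-, hra⟩
    · exact ⟨x, mem_insert_of_mem hx, hxa⟩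
    · exact absurd hxr (hr x hx)
    · exact ⟨r, mem_insert_self r R, hra⟩
  · rcases mem_insert.mp hx with rfl | hxR <;> rcases mem_insert.mp hy with rfl | hyR
    · rfl
    · exact absurd hxy.symm (hr y hyR)
    · exact absurd hxy (hr x hxR)
    · exact h.eq_of_reachable hxR hyR (hxy.mono hle)

lemma IsRootSet.card_filter_not_reachable [Fintype V] (hR : IsRootSet G R) :
    #{q : V × V | q.1 ∈ R ∧ ¬ G.Reachable q.1 q.2} = (#R - 1) * Fintype.card V := by
  have hfiber (u : V) : #{r | r ∈ R ∧ ¬ G.Reachable r u} = #R - 1 := by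
    obtain ⟨x, hx, hxu⟩ := hR.exists_mem_reachable u
    rw [← card_erase_of_mem hx]
    congr 1
    ext r
    simp only [mem_filter, mem_univ, true_and, mem_erase]
    refine ⟨fun ⟨hr, hru⟩ => ⟨fun hrx => hru (hrx ▸ hxu), hr⟩, fun ⟨hrx, hr⟩ => ⟨hr, ?_⟩⟩
    exact fun hru => hrx (hR.eq_of_reachable hr hx (hru.trans hxu.symm))
  rw [card_filter, Fintype.sum_prod_type_right]
  simp only [← card_filter, hfiber, sum_const, card_univ, smul_eq_mul, mul_comm]

end RootSet

section Kappa

variable {V : Type*} [Finite V] {G : SimpleGraph V} {u v : V}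

lemma kappa_bot : kappa (⊥ : SimpleGraph V) = Nat.card V := by
  have := Fintype.ofFinite V
  rw [← isRootSet_bot.card_eq_kappa, card_univ, Nat.card_eq_fintype_card]

lemma kappa_sup_edge (h : ¬ G.Reachable u v) : kappa (G ⊔ edge u v) + 1 = kappa G := by
  classical
  have := Fintype.ofFinite V
  obtain ⟨R, hR⟩ := exists_isRootSet G
  obtain ⟨r, hr, hru⟩ := hR.exists_mem_reachable u
  rw [← hR.card_eq_kappa, ← (hR.sup_edge hr hru h).card_eq_kappa, card_erase_add_one hr]

lemma SimpleGraph.IsAcyclic.ncard_edgeSet_add_kappa (hG : G.IsAcyclic) :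
    G.edgeSet.ncard + kappa G = Nat.card V := by
  induction hm : G.edgeSet.ncard generalizing G with
  | zero =>
    have hbot : G = ⊥ := edgeSet_eq_empty.mp ((Set.ncard_eq_zero (Set.toFinite _)).mp hm)
    rw [hbot, kappa_bot, zero_add]
  | succ m ih =>
    obtain ⟨e, he⟩ := Set.nonempty_of_ncard_ne_zero (by omega : G.edgeSet.ncard ≠ 0)
    induction e with | h a b => ?_
    have hbridge : ¬ (G.deleteEdges {s(a, b)}).Reachable a b :=
      isAcyclic_iff_forall_adj_isBridge.mp hG he
    have hcard : (G.deleteEdges {s(a, b)}).edgeSet.ncard = m := by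
      rw [edgeSet_deleteEdges, Set.ncard_sdiff_singleton_of_mem he, hm, Nat.add_sub_cancel]
    have hkappa := kappa_sup_edge hbridge
    rw [deleteEdges_edge_sup_edge he] at hkappa
    have := ih (hG.anti (deleteEdges_le _)) hcard
    omega

end Kappa

section Parent

variable {V : Type*} {G : SimpleGraph V} {R : Finset V} {r u : V}

/-- `u` is the parent of `r` in the forest `G` rooted at `R`. -/
def IsParent (G : SimpleGraph V) (R : Finset V) (u r : V) : Prop :=
  G.Adj r u ∧ ∀ x ∈ R, ¬ (G.deleteEdges {s(r, u)}).Reachable x r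

lemma IsParent.notMem (h : IsParent G R u r) : r ∉ R :=
  fun hr => h.2 r hr .rfl

lemma IsRootSet.not_isParent_and_isParent (hR : IsRootSet G R) :
    ¬ (IsParent G R u r ∧ IsParent G R r u) := by
  rintro ⟨hur, hru⟩
  obtain ⟨x, hx, hxr⟩ := hR.exists_mem_reachable r
  rw [IsParent, Sym2.eq_swap] at hru
  rcases reachable_deleteEdges_or (u := r) (v := u) hxr with h | ⟨h, -⟩ | ⟨h, -⟩
  exacts [hur.2 x hx h, hur.2 x hx h, hru.2 x hx h]

lemma IsRootSet.isParent_or_isParent (hR : IsRootSet G R) (hG : G.IsAcyclic)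
    (hadj : G.Adj r u) : IsParent G R u r ∨ IsParent G R r u := by
  have hbridge : ¬ (G.deleteEdges {s(r, u)}).Reachable r u :=
    isAcyclic_iff_forall_adj_isBridge.mp hG hadj
  have hle : G.deleteEdges {s(r, u)} ≤ G := deleteEdges_le _
  obtain ⟨x, hx, hxr⟩ := hR.exists_mem_reachable r
  obtain h | h : (G.deleteEdges {s(r, u)}).Reachable x r ∨
      (G.deleteEdges {s(r, u)}).Reachable x u := by
    rcases reachable_deleteEdges_or (u := r) (v := u) hxr with h | ⟨h, -⟩ | ⟨h, -⟩ <;> tauto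
  · right
    refine ⟨hadj.symm, fun y hy hyu => ?_⟩
    rw [Sym2.eq_swap] at hyu
    obtain rfl := hR.eq_of_reachable hy hx
      ((hyu.mono hle).trans (hadj.symm.reachable.trans hxr.symm))
    exact hbridge (h.symm.trans hyu)
  · left
    refine ⟨hadj, fun y hy hyr => ?_⟩
    obtain rfl := hR.eq_of_reachable hy hx ((hyr.mono hle).trans hxr.symm)
    exact hbridge (hyr.symm.trans h)

lemma IsRootSet.card_isParent [Fintype V] (hR : IsRootSet G R) (hG : G.IsAcyclic) :
    #{q : V × V | IsParent G R q.2 q.1} = G.edgeSet.ncard := by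
  rw [← coe_edgeFinset, Set.ncard_coe_finset]
  refine card_bij (fun q _ => s(q.1, q.2)) (fun q hq => ?_) (fun q hq q' hq' hqq' => ?_) ?_
  · exact mem_edgeFinset.mpr (mem_filter.mp hq).2.1
  · simp only [mem_filter, mem_univ, true_and] at hq hq'
    rcases Sym2.eq_iff.mp hqq' with ⟨h1, h2⟩ | ⟨h1, h2⟩
    · exact Prod.ext h1 h2
    · rw [← h1, ← h2] at hq'
      exact absurd ⟨hq, hq'⟩ hR.not_isParent_and_isParent
  · intro e he
    induction e with | h a b => ?_
    rcases hR.isParent_or_isParent hG (mem_edgeFinset.mp he) with h | h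
    · exact ⟨(a, b), mem_filter.mpr ⟨mem_univ _, h⟩, rfl⟩
    · exact ⟨(b, a), mem_filter.mpr ⟨mem_univ _, h⟩, Sym2.eq_swap⟩

lemma IsRootSet.isParent_sup_edge [DecidableEq V] (hR : IsRootSet G R) (hr : r ∈ R)
    (hru : ¬ G.Reachable r u) : IsParent (G ⊔ edge r u) (R.erase r) u r := by
  have hne : r ≠ u := by rintro rfl; exact hru .rfl
  refine ⟨Or.inr ((edge_adj _ _ _ _).mpr ⟨Or.inl ⟨rfl, rfl⟩, hne⟩), fun x hx hxr => ?_⟩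
  rw [deleteEdges_sup_edge fun h => hru h.reachable] at hxr
  exact (mem_erase.mp hx).1 (hR.eq_of_reachable (mem_erase.mp hx).2 hr hxr)

end Parent

lemma Finset.sum_filter_product_univ {α β M : Type*} [Fintype β] [AddCommMonoid M]
    (s : Finset α) (p : α × β → Prop) [DecidablePred p] (f : α → M) :
    ∑ t ∈ (s ×ˢ univ).filter p, f t.1 = ∑ a ∈ s, #{b | p (a, b)} • f a := by
  rw [sum_filter, sum_product]
  refine sum_congr rfl fun a _ => ?_
  rw [← sum_filter]
  exact sum_const (f a)

section RootedForests

variable {V : Type*} [Fintype V] [DecidableEq V] {P : SimpleGraph V × Finset V} {k : ℕ} {r u : V}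

variable (V) in
noncomputable def rootedForests (j : ℕ) : Finset (SimpleGraph V × Finset V) :=
  {P | P.1.IsAcyclic ∧ IsRootSet P.1 P.2 ∧ kappa P.1 = j}

lemma mem_rootedForests {j : ℕ} :
    P ∈ rootedForests V j ↔ P.1.IsAcyclic ∧ IsRootSet P.1 P.2 ∧ kappa P.1 = j := by
  simp [rootedForests]

lemma sup_edge_mem_rootedForests (hP : P ∈ rootedForests V (k + 1)) (hr : r ∈ P.2)
    (hru : ¬ P.1.Reachable r u) : (P.1 ⊔ edge r u, P.2.erase r) ∈ rootedForests V k := by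
  obtain ⟨hG, hR, hκ⟩ := mem_rootedForests.mp hP
  have hR' := hR.sup_edge hr .rfl hru
  refine mem_rootedForests.mpr ⟨hG.sup_edge_of_not_reachable hru, hR', ?_⟩
  rw [← hR'.card_eq_kappa, card_erase_of_mem hr, hR.card_eq_kappa, hκ, Nat.add_sub_cancel]

lemma deleteEdges_mem_rootedForests (hP : P ∈ rootedForests V k) (h : IsParent P.1 P.2 u r) :
    (P.1.deleteEdges {s(r, u)}, insert r P.2) ∈ rootedForests V (k + 1) := by
  obtain ⟨hG, hR, hκ⟩ := mem_rootedForests.mp hP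
  have hR' := hR.deleteEdges h.2
  refine mem_rootedForests.mpr ⟨hG.anti (deleteEdges_le _), hR', ?_⟩
  rw [← hR'.card_eq_kappa, card_insert_of_notMem h.notMem, hR.card_eq_kappa, hκ]

variable (V) in
noncomputable def joinChoices (k : ℕ) : Finset ((SimpleGraph V × Finset V) × (V × V)) :=
  (rootedForests V (k + 1) ×ˢ univ).filter fun t =>
    t.2.1 ∈ t.1.2 ∧ ¬ t.1.1.Reachable t.2.1 t.2.2

variable (V) in
noncomputable def cutChoices (k : ℕ) : Finset ((SimpleGraph V × Finset V) × (V × V)) :=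
  (rootedForests V k ×ˢ univ).filter fun t => IsParent t.1.1 t.1.2 t.2.2 t.2.1

lemma sum_joinChoices {M : Type*} [AddCommMonoid M] (f : SimpleGraph V × Finset V → M) :
    ∑ t ∈ joinChoices V k, f t.1 =
      ∑ P ∈ rootedForests V (k + 1), (k * Fintype.card V) • f P := by
  rw [joinChoices, sum_filter_product_univ]
  refine sum_congr rfl fun P hP => ?_
  obtain ⟨-, hR, hκ⟩ := mem_rootedForests.mp hP
  rw [hR.card_filter_not_reachable, hR.card_eq_kappa, hκ, Nat.add_sub_cancel]

lemma sum_cutChoices {M : Type*} [AddCommMonoid M] (f : SimpleGraph V × Finset V → M) :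
    ∑ t ∈ cutChoices V k, f t.1 = ∑ P ∈ rootedForests V k, P.1.edgeSet.ncard • f P := by
  rw [cutChoices, sum_filter_product_univ]
  refine sum_congr rfl fun P hP => ?_
  obtain ⟨hG, hR, -⟩ := mem_rootedForests.mp hP
  rw [hR.card_isParent hG]

lemma sum_joinChoices_eq_sum_cutChoices (lam nu : ℝ) :
    ∑ t ∈ joinChoices V k, lam * (lam ^ t.1.1.edgeSet.ncard * nu ^ kappa t.1.1) =
      ∑ t ∈ cutChoices V k, nu * (lam ^ t.1.1.edgeSet.ncard * nu ^ kappa t.1.1) := by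
  refine sum_nbij' (fun t => ((t.1.1 ⊔ edge t.2.1 t.2.2, t.1.2.erase t.2.1), t.2))
    (fun t => ((t.1.1.deleteEdges {s(t.2.1, t.2.2)}, insert t.2.1 t.1.2), t.2))
    ?_ ?_ ?_ ?_ ?_ <;> rintro ⟨⟨G, R⟩, r, u⟩ ht <;>
    simp only [joinChoices, cutChoices, mem_filter, mem_product, mem_univ, and_true,
      Prod.mk.injEq] at ht ⊢
  · obtain ⟨hP, hr, hru⟩ := ht
    exact ⟨sup_edge_mem_rootedForests hP hr hru,
      (mem_rootedForests.mp hP).2.1.isParent_sup_edge hr hru⟩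
  · obtain ⟨hP, hpar⟩ := ht
    exact ⟨deleteEdges_mem_rootedForests hP hpar, mem_insert_self r R,
      isAcyclic_iff_forall_adj_isBridge.mp (mem_rootedForests.mp hP).1 hpar.1⟩
  · obtain ⟨-, hr, hru⟩ := ht
    exact ⟨deleteEdges_sup_edge fun h => hru h.reachable, insert_erase hr⟩
  · obtain ⟨-, hpar⟩ := ht
    exact ⟨deleteEdges_edge_sup_edge hpar.1, erase_insert hpar.notMem⟩
  · obtain ⟨hP, hr, hru⟩ := ht
    have hne : r ≠ u := by rintro rfl; exact hru .rfl
    have hedges : (G ⊔ edge r u).edgeSet.ncard = G.edgeSet.ncard + 1 := by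
      rw [edgeSet_sup, edgeSet_edge_of_ne hne, Set.union_singleton,
        Set.ncard_insert_of_notMem fun h : s(r, u) ∈ G.edgeSet => hru h.reachable]
    rw [hedges, ← kappa_sup_edge hru]
    ring

theorem lam_mul_sum_rootedForests_succ (lam nu : ℝ) :
    lam * (k * Fintype.card V) *
        ∑ P ∈ rootedForests V (k + 1), lam ^ P.1.edgeSet.ncard * nu ^ kappa P.1 =
      nu * (Fintype.card V - k) *
        ∑ P ∈ rootedForests V k, lam ^ P.1.edgeSet.ncard * nu ^ kappa P.1 := by
  set w : SimpleGraph V × Finset V → ℝ := fun P => lam ^ P.1.edgeSet.ncard * nu ^ kappa P.1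
  calc lam * (k * Fintype.card V) * ∑ P ∈ rootedForests V (k + 1), w P
      = ∑ P ∈ rootedForests V (k + 1), (k * Fintype.card V) • (lam * w P) := by
        rw [mul_sum]
        refine sum_congr rfl fun P _ => ?_
        rw [nsmul_eq_mul]
        push_cast
        ring
    _ = ∑ t ∈ joinChoices V k, lam * w t.1 := (sum_joinChoices _).symm
    _ = ∑ t ∈ cutChoices V k, nu * w t.1 := sum_joinChoices_eq_sum_cutChoices lam nu
    _ = ∑ P ∈ rootedForests V k, P.1.edgeSet.ncard • (nu * w P) :=
        sum_cutChoices fun P => nu * w P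
    _ = nu * (Fintype.card V - k) * ∑ P ∈ rootedForests V k, w P := by
        rw [mul_sum]
        refine sum_congr rfl fun P hP => ?_
        obtain ⟨hG, -, hκ⟩ := mem_rootedForests.mp hP
        have hcount := hG.ncard_edgeSet_add_kappa
        rw [hκ, Nat.card_eq_fintype_card] at hcount
        rw [nsmul_eq_mul, ← hcount]
        push_cast
        ring

end RootedForests

theorem stmt15_general {n : ℕ} (hn : 0 < n) (lam nu : ℝ) (hlam : 0 < lam)
    (k : ℕ) (hk : 1 ≤ k) :
    ∑ P ∈ (rootedSet ((Finset.univ : Finset (SimpleGraph (Fin n))).filter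
            (fun G => G.IsAcyclic))).filter (fun P => kappa P.1 = k + 1),
        lam ^ P.1.edgeSet.ncard * nu ^ kappa P.1 =
      ((n : ℝ) - k) / n * (nu / (lam * k)) *
        ∑ P ∈ (rootedSet ((Finset.univ : Finset (SimpleGraph (Fin n))).filter
            (fun G => G.IsAcyclic))).filter (fun P => kappa P.1 = k),
          lam ^ P.1.edgeSet.ncard * nu ^ kappa P.1 := by
  have hforests (j : ℕ) : (rootedSet ((Finset.univ : Finset (SimpleGraph (Fin n))).filter
      (fun G => G.IsAcyclic))).filter (fun P => kappa P.1 = j) = rootedForests (Fin n) j := by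
    ext P
    simp [rootedSet, mem_rootedForests, and_assoc]
  have key := lam_mul_sum_rootedForests_succ (V := Fin n) (k := k) lam nu
  rw [Fintype.card_fin] at key
  rw [hforests, hforests]
  have hk0 : (k : ℝ) ≠ 0 := Nat.cast_ne_zero.mpr (by omega)
  have hn0 : (n : ℝ) ≠ 0 := Nat.cast_ne_zero.mpr (by omega)
  have hlam0 : lam ≠ 0 := hlam.ne'
  field_simp
  linear_combination key

/-- for the class of rooted forests on `[n]` with weighting
`τ(F) = λ^{e(F)}·ν^{κ(F)}` and `R°_n ∈_τ F°`,
`P(κ(R°_n) = k+1) = ((n−k)/n)·(ν/(λk))·P(κ(R°_n) = k)` for each `k ≥ 1`. -/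
theorem stmt15 {n : ℕ} (hn : 0 < n) (lam nu : ℝ) (hlam : 0 < lam) (hnu : 0 < nu)
    (k : ℕ) (hk : 1 ≤ k) :
    ∑ P ∈ (rootedSet ((Finset.univ : Finset (SimpleGraph (Fin n))).filter
            (fun G => G.IsAcyclic))).filter (fun P => kappa P.1 = k + 1),
        lam ^ P.1.edgeSet.ncard * nu ^ kappa P.1 =
      ((n : ℝ) - k) / n * (nu / (lam * k)) *
        ∑ P ∈ (rootedSet ((Finset.univ : Finset (SimpleGraph (Fin n))).filter
            (fun G => G.IsAcyclic))).filter (fun P => kappa P.1 = k),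
          lam ^ P.1.edgeSet.ncard * nu ^ kappa P.1 :=
  stmt15_general hn lam nu hlam k hk
end

section
/- There exists a constant c > 0 such that for all positive integers n, Σ_{a=1}^{n−1} C(n,a)·a^a·(n−a)^{n−a} ≤ c·n^{n+1/2}. -/
open scoped Classical

/-!
Write `b = n - a`. By Stirling's bounds `√(2πk) (k/e)^k ≤ k! ≤ e √k (k/e)^k`, the term
`C(n,a) a^a b^b = n! a^a b^b / (a! b!)` is at most `e/(2π) · n^n · √(n/(ab))`, and
`√(n/(ab)) = √(1/a + 1/b) ≤ 1/√a + 1/√b`. Summing over `a`, both halves give `∑_{a<n} 1/√a ≤ 2√n`.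
-/

open Real Finset Nat

theorem factorial_le_exp_one_mul_stirling {n : ℕ} (hn : n ≠ 0) :
    (n ! : ℝ) ≤ exp 1 * (√n * (n / exp 1) ^ n) := by
  obtain ⟨m, rfl⟩ := exists_eq_succ_of_ne_zero hn
  have hseq : Stirling.stirlingSeq (m + 1) ≤ exp 1 / √2 := by
    simpa [Stirling.stirlingSeq_one] using Stirling.stirlingSeq'_antitone (Nat.zero_le m)
  rw [Stirling.stirlingSeq, div_le_iff₀ (by positivity)] at hseq
  refine hseq.trans_eq ?_
  rw [sqrt_mul zero_le_two]
  field_simp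

theorem sqrt_add_le_sqrt_add_sqrt {x y : ℝ} (hx : 0 ≤ x) (hy : 0 ≤ y) : √(x + y) ≤ √x + √y := by
  rw [sqrt_le_left (by positivity)]
  nlinarith [sq_sqrt hx, sq_sqrt hy, sqrt_nonneg x, sqrt_nonneg y]

theorem choose_mul_pow_mul_pow_mul_le (a b : ℕ) :
    ((a + b).choose a : ℝ) * a ^ a * b ^ b * (2 * π * √(a * b)) ≤
      exp 1 * √(a + b) * (a + b) ^ (a + b) := by
  obtain ⟨rfl, rfl⟩ | hab : a = 0 ∧ b = 0 ∨ a + b ≠ 0 := by omega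
  · simp
  have hfac : ((a + b).choose a : ℝ) * a ! * b ! = (a + b)! := by
    have h := Nat.choose_mul_factorial_mul_factorial (Nat.le_add_right a b)
    rw [Nat.add_sub_cancel_left] at h
    exact_mod_cast h
  have hsqrt : √(2 * π * a) * √(2 * π * b) = 2 * π * √(a * b) := by
    rw [← sqrt_mul (by positivity), show 2 * π * a * (2 * π * b) = (2 * π) ^ 2 * (a * b) by ring,
      sqrt_mul (by positivity), sqrt_sq (by positivity)]
  calc _ = ((a + b).choose a : ℝ) * (√(2 * π * a) * (a / exp 1) ^ a) *
        (√(2 * π * b) * (b / exp 1) ^ b) * exp 1 ^ (a + b) := by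
        rw [← hsqrt, div_pow, div_pow, pow_add]
        field_simp
    _ ≤ ((a + b).choose a : ℝ) * a ! * b ! * exp 1 ^ (a + b) := by
        gcongr <;> exact Stirling.le_factorial_stirling _
    _ ≤ exp 1 * (√(a + b) * ((a + b) / exp 1) ^ (a + b)) * exp 1 ^ (a + b) := by
        rw [hfac]
        gcongr
        exact_mod_cast factorial_le_exp_one_mul_stirling hab
    _ = _ := by
        rw [div_pow]
        field_simp

theorem choose_mul_pow_mul_pow_le {a b : ℕ} (ha : a ≠ 0) (hb : b ≠ 0) :
    ((a + b).choose a : ℝ) * a ^ a * b ^ b ≤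
      exp 1 / (2 * π) * (a + b : ℕ) ^ (a + b) * (1 / √a + 1 / √b) := by
  have hsa : 0 < √(a : ℝ) := sqrt_pos.mpr (by positivity)
  have hsb : 0 < √(b : ℝ) := sqrt_pos.mpr (by positivity)
  have hab : √((a : ℝ) + b) ≤ √a + √b := sqrt_add_le_sqrt_add_sqrt (by positivity) (by positivity)
  have hstirling := choose_mul_pow_mul_pow_mul_le a b
  rw [sqrt_mul (by positivity)] at hstirling
  rw [← mul_le_mul_iff_of_pos_right (show 0 < 2 * π * (√a * √b) by positivity)]
  refine hstirling.trans ?_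
  push_cast
  have hrhs : exp 1 / (2 * π) * ((a : ℝ) + b) ^ (a + b) * (1 / √a + 1 / √b) *
      (2 * π * (√a * √b)) = exp 1 * (√a + √b) * ((a : ℝ) + b) ^ (a + b) := by
    field_simp
    ring
  rw [hrhs]
  gcongr

theorem one_div_sqrt_add_one_le {x : ℝ} (hx : 0 ≤ x) : 1 / √(x + 1) ≤ 2 * (√(x + 1) - √x) := by
  have hs : 0 < √(x + 1) := sqrt_pos.mpr (by linarith)
  rw [div_le_iff₀ hs]
  nlinarith [sq_sqrt hx, sq_sqrt (show 0 ≤ x + 1 by linarith), sq_nonneg (√(x + 1) - √x)]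

theorem sum_Icc_one_div_sqrt_le (n : ℕ) : ∑ a ∈ Icc 1 n, 1 / √a ≤ 2 * √n := by
  induction n with
  | zero => simp
  | succ n ih =>
    rw [sum_Icc_succ_top (by omega)]
    have := one_div_sqrt_add_one_le (Nat.cast_nonneg (α := ℝ) n)
    push_cast
    linarith

/-- there is a constant `c > 0` with
`Σ_{a=1}^{n−1} C(n,a)·a^a·(n−a)^{n−a} ≤ c·n^{n+1/2}` for all positive integers `n`. -/
theorem stmt19 :
    ∃ c : ℝ, 0 < c ∧ ∀ n : ℕ, 1 ≤ n →
      ∑ a ∈ Finset.Ico 1 n, ((n.choose a : ℝ) * (a : ℝ) ^ a *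
          ((n - a : ℕ) : ℝ) ^ (n - a)) ≤
        c * (n : ℝ) ^ n * Real.sqrt n := by
  refine ⟨2 * exp 1 / π, by positivity, fun n _ => ?_⟩
  have hterm : ∀ a ∈ Ico 1 n, (n.choose a : ℝ) * a ^ a * ((n - a : ℕ) : ℝ) ^ (n - a) ≤
      exp 1 / (2 * π) * n ^ n * (1 / √a + 1 / √((n - a : ℕ) : ℝ)) := by
    intro a ha
    obtain ⟨ha1, han⟩ := mem_Ico.mp ha
    have hsplit : a + (n - a) = n := by omega
    simpa only [hsplit] using choose_mul_pow_mul_pow_le (a := a) (b := n - a) (by omega) (by omega)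
  have hreflect : ∑ a ∈ Ico 1 n, 1 / √((n - a : ℕ) : ℝ) = ∑ a ∈ Ico 1 n, 1 / √a := by
    simpa using sum_Ico_reflect (fun j : ℕ => 1 / √(j : ℝ)) 1 (Nat.le_succ n)
  have hhalf : ∑ a ∈ Ico 1 n, 1 / √(a : ℝ) ≤ 2 * √n :=
    (sum_le_sum_of_subset_of_nonneg Ico_subset_Icc_self (fun _ _ _ => by positivity)).trans
      (sum_Icc_one_div_sqrt_le n)
  calc _ ≤ ∑ a ∈ Ico 1 n, exp 1 / (2 * π) * n ^ n * (1 / √a + 1 / √((n - a : ℕ) : ℝ)) :=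
        sum_le_sum hterm
    _ = exp 1 / (2 * π) * n ^ n * (2 * ∑ a ∈ Ico 1 n, 1 / √(a : ℝ)) := by
        rw [← mul_sum, sum_add_distrib, hreflect, ← two_mul]
    _ ≤ exp 1 / (2 * π) * n ^ n * (2 * (2 * √n)) := by gcongr
    _ = 2 * exp 1 / π * n ^ n * √n := by field_simp
end
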